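/- Let m ≥ 1, N ≥ 1, γ ∈ (0,1], c ∈ (0,1], β ∈ (0,1), q_α ∈ ℝ, and let T_1, …, T_N be independent random variables taking values in [0, m] with E[∑_{i=1}^N T_i] ≥ mN·(1/2 + (γ/2)·c). Let Z := (∑_{i=1}^N T_i − mN/2)/√(mN/4). If √(mN)·γ·c ≥ q_α + √(2m·ln(1/β)), then P(Z ≤ q_α) ≤ β; in particular, this holds whenever N ≥ [q_α + √(2m·ln(1/β))]² / (m·γ²·c²). -/

import Mathlib

open MeasureTheory ProbabilityTheory Real

/-! By Hoeffding's inequality for the lower tail, `P(∑ T_i ≤ E[∑ T_i] - ε) ≤ exp(-2ε² / (N m²))`.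
The event `Z ≤ q_α` is of this form with `ε ≥ √(mN)/2 · (√(mN)γc - q_α) ≥ √(mN)/2 · √(2m log(1/β))`,
and for such `ε` the exponential is at most `β`. The sample-size condition implies the first
condition after taking square roots. -/

theorem measureReal_sum_le_sum_integral_sub_le {Ω ι : Type*} [MeasurableSpace Ω]
    {μ : Measure Ω} [IsProbabilityMeasure μ] [Fintype ι] {X : ι → Ω → ℝ}
    (hmeas : ∀ i, AEMeasurable (X i) μ) (hindep : iIndepFun X μ) {a b : ℝ}
    (hab : ∀ i, ∀ᵐ ω ∂μ, X i ω ∈ Set.Icc a b) {ε : ℝ} (hε : 0 ≤ ε) :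
    μ.real {ω | ∑ i, X i ω ≤ ∑ i, μ[X i] - ε} ≤
      exp (-2 * ε ^ 2 / (Fintype.card ι * (b - a) ^ 2)) := by
  have hsubG : ∀ i ∈ Finset.univ,
      HasSubgaussianMGF (fun ω ↦ μ[X i] - X i ω) ((‖b - a‖₊ / 2) ^ 2) μ := fun i _ ↦ by
    convert (hasSubgaussianMGF_of_mem_Icc (hmeas i) (hab i)).neg using 1
    ext ω
    simp
  have hindep' : iIndepFun (fun i ω ↦ μ[X i] - X i ω) μ :=
    hindep.comp (fun i y ↦ ∫ ω, X i ω ∂μ - y) fun _ ↦ measurable_id.const_sub _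
  have hset : {ω | ∑ i, X i ω ≤ ∑ i, μ[X i] - ε} = {ω | ε ≤ ∑ i, (μ[X i] - X i ω)} := by
    ext ω
    simp only [Set.mem_ofPred_eq, Finset.sum_sub_distrib]
    constructor <;> intro h <;> linarith
  rw [hset]
  refine (HasSubgaussianMGF.measure_sum_ge_le_of_iIndepFun hindep' hsubG hε).trans_eq ?_
  congr 1
  simp only [Finset.sum_const, Finset.card_univ, nsmul_eq_mul, NNReal.coe_mul, NNReal.coe_natCast,
    NNReal.coe_pow, NNReal.coe_div, coe_nnnorm, norm_eq_abs, NNReal.coe_ofNat]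
  rw [show 2 * (Fintype.card ι * (|b - a| / 2) ^ 2) = Fintype.card ι * (b - a) ^ 2 / 2 by
    rw [div_pow, sq_abs]; ring, div_div_eq_mul_div]
  ring

theorem exp_neg_two_mul_sq_div_le {k ε β : ℝ} (hk : 0 < k) (hβ : 0 < β)
    (hε : √(k * log (1 / β) / 2) ≤ ε) :
    exp (-2 * ε ^ 2 / k) ≤ β := by
  have h := (sqrt_le_iff.mp hε).2
  rw [← le_log_iff_exp_le hβ, div_le_iff₀ hk]
  rw [one_div, log_inv] at h
  linarith

theorem sqrt_div_four (x : ℝ) : √(x / 4) = √x / 2 := by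
  rw [sqrt_div' _ (by norm_num), show (4 : ℝ) = 2 ^ 2 by norm_num, sqrt_sq zero_le_two]

theorem zscore_le_iff {v : ℝ} (hv : 0 < v) (x q : ℝ) :
    (x - v / 2) / √(v / 4) ≤ q ↔ x ≤ v / 2 + q * √v / 2 := by
  rw [sqrt_div_four, div_le_iff₀ (by positivity)]
  constructor <;> intro h <;> linarith

theorem le_sqrt_mul_mul_mul_of_sq_div_le {x a n g c : ℝ} (ha : 0 < a) (hg : 0 < g) (hc : 0 < c)
    (h : x ^ 2 / (a * g ^ 2 * c ^ 2) ≤ n) : x ≤ √(a * n) * g * c := by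
  rw [div_le_iff₀ (by positivity)] at h
  calc x ≤ √((a * n) * (g * c) ^ 2) := le_sqrt_of_sq_le (by linarith)
    _ = √(a * n) * g * c := by rw [sqrt_mul' _ (by positivity), sqrt_sq (by positivity)]; ring

/-- Sample-size bound for watermark detection: if `T_1, …, T_N` are independent with values in
`[0, m]` and `E[∑ T_i] ≥ mN(1/2 + (γ/2)c)`, and `Z := (∑ T_i − mN/2)/√(mN/4)`, then
`√(mN)·γ·c ≥ q_α + √(2m·ln(1/β))` implies `P(Z ≤ q_α) ≤ β`; in particular, this holds
whenever `N ≥ [q_α + √(2m·ln(1/β))]² / (m·γ²·c²)`. -/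
theorem zscore_sample_size_bound {Ω : Type*} [MeasurableSpace Ω]
    (μ : Measure Ω) [IsProbabilityMeasure μ]
    (m N : ℕ) (hm : 1 ≤ m) (hN : 1 ≤ N)
    (γ c β qα : ℝ) (hγ : γ ∈ Set.Ioc (0 : ℝ) 1) (hc : c ∈ Set.Ioc (0 : ℝ) 1)
    (hβ : β ∈ Set.Ioo (0 : ℝ) 1)
    (T : Fin N → Ω → ℝ) (hmeas : ∀ i, Measurable (T i))
    (hindep : iIndepFun T μ)
    (hbdd : ∀ i ω, T i ω ∈ Set.Icc (0 : ℝ) m)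
    (hmean : (m : ℝ) * N * (1 / 2 + γ / 2 * c) ≤ ∫ ω, ∑ i : Fin N, T i ω ∂μ) :
    (Real.sqrt ((m : ℝ) * N) * γ * c ≥ qα + Real.sqrt (2 * m * Real.log (1 / β)) →
      (μ {ω | ((∑ i : Fin N, T i ω) - (m : ℝ) * N / 2) /
          Real.sqrt ((m : ℝ) * N / 4) ≤ qα}).toReal ≤ β) ∧
    ((N : ℝ) ≥ (qα + Real.sqrt (2 * m * Real.log (1 / β))) ^ 2 / ((m : ℝ) * γ ^ 2 * c ^ 2) →
      (μ {ω | ((∑ i : Fin N, T i ω) - (m : ℝ) * N / 2) /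
          Real.sqrt ((m : ℝ) * N / 4) ≤ qα}).toReal ≤ β) := by
  have hmpos : (0 : ℝ) < m := by exact_mod_cast hm
  have hNpos : (0 : ℝ) < N := by exact_mod_cast hN
  have hmN : (0 : ℝ) < m * N := mul_pos hmpos hNpos
  have key (h : √((m : ℝ) * N) * γ * c ≥ qα + √(2 * m * log (1 / β))) :
      (μ {ω | ((∑ i, T i ω) - (m : ℝ) * N / 2) / √((m : ℝ) * N / 4) ≤ qα}).toReal ≤ β := by
    have hsum : ∫ ω, ∑ i, T i ω ∂μ = ∑ i, μ[T i] := integral_finsetSum _ fun i _ ↦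
      Integrable.of_mem_Icc 0 m (hmeas i).aemeasurable (ae_of_all _ (hbdd i))
    set ε := ∑ i, μ[T i] - (m * N / 2 + qα * √(m * N) / 2) with hε
    have hgap : √(N * m ^ 2 * log (1 / β) / 2) ≤ ε := calc
      √(N * m ^ 2 * log (1 / β) / 2) = √(m * N) / 2 * √(2 * m * log (1 / β)) := by
        rw [← sqrt_div_four, ← sqrt_mul (by positivity)]
        ring_nf
      _ ≤ √(m * N) / 2 * (√(m * N) * γ * c - qα) := by gcongr; linarith
      _ ≤ ε := by linear_combination hmean + hsum - hε + (γ * c / 2) * sq_sqrt hmN.le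
    simp_rw [zscore_le_iff hmN, show (m : ℝ) * N / 2 + qα * √(m * N) / 2 = ∑ i, μ[T i] - ε by ring]
    calc μ.real _ ≤ exp (-2 * ε ^ 2 / (Fintype.card (Fin N) * (m - 0) ^ 2)) :=
          measureReal_sum_le_sum_integral_sub_le (fun i ↦ (hmeas i).aemeasurable) hindep
            (fun i ↦ ae_of_all _ (hbdd i)) ((sqrt_nonneg _).trans hgap)
      _ ≤ β := exp_neg_two_mul_sq_div_le (by simpa using mul_pos hNpos (pow_pos hmpos 2)) hβ.1
          (by simpa using hgap)
  exact ⟨key, fun h ↦ key (le_sqrt_mul_mul_mul_of_sq_div_le hmpos hγ.1 hc.1 h)⟩
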